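/- Define group elements w_n of G(1,2) recursively by w_0 = t and w_{n+1} = b·w_n·a·w_n⁻¹·b⁻¹, and define their lengths as words by ℓ(0) = 1 and ℓ(n+1) = 2·ℓ(n) + 3. Then for all n: ℓ(n) = 2^{n+2} − 3, and w_n = t^{tow(n+1)} in G(1,2), where tow is the tower function defined by tow(0) = 0 and tow(i+1) = 2^{tow(i)}. -/

import Mathlib

/-- The ring of dyadic rationals `ℤ[1/2]`, as a subring of `ℚ`. -/
def DyadicQ : Subring ℚ := Subring.closure {(2:ℚ)⁻¹}

lemma DyadicQ.two_mem : (2:ℚ) ∈ DyadicQ := by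
  have := add_mem (Subring.one_mem DyadicQ) (Subring.one_mem DyadicQ)
  rwa [one_add_one_eq_two] at this

lemma DyadicQ.half_mem : (2:ℚ)⁻¹ ∈ DyadicQ := Subring.subset_closure rfl

/-- `2` as a unit of `ℤ[1/2]`. -/
def DyadicQ.two : DyadicQˣ where
  val := ⟨2, DyadicQ.two_mem⟩
  inv := ⟨(2:ℚ)⁻¹, DyadicQ.half_mem⟩
  val_inv := by ext; norm_num
  inv_val := by ext; norm_num

/-- The powers `2^m` for `m : ℤ`, as elements of `ℤ[1/2]`. -/
def pow2 (m : ℤ) : DyadicQ := ((DyadicQ.two ^ m : DyadicQˣ) : DyadicQ)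

lemma pow2_add (m q : ℤ) : pow2 (m + q) = pow2 m * pow2 q := by
  simp [pow2, zpow_add]

lemma pow2_zero : pow2 0 = 1 := by simp [pow2]

/-- The group `H = ℤ[1/2] ⋊ ℤ`, where `ℤ` acts by powers of `2`;
multiplication is `(r,m)·(s,q) = (r + 2^m·s, m+q)`. -/
@[ext] structure Hgrp where
  r : DyadicQ
  m : ℤ

instance : Mul Hgrp := ⟨fun x y => ⟨x.r + pow2 x.m * y.r, x.m + y.m⟩⟩
instance : One Hgrp := ⟨⟨0, 0⟩⟩
instance : Inv Hgrp := ⟨fun x => ⟨-(pow2 (-x.m) * x.r), -x.m⟩⟩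

lemma Hgrp.mul_def (x y : Hgrp) : x * y = ⟨x.r + pow2 x.m * y.r, x.m + y.m⟩ := rfl
lemma Hgrp.one_def : (1 : Hgrp) = ⟨0, 0⟩ := rfl
lemma Hgrp.inv_def (x : Hgrp) : x⁻¹ = ⟨-(pow2 (-x.m) * x.r), -x.m⟩ := rfl

instance : Group Hgrp where
  mul_assoc a b c := by
    simp only [Hgrp.mul_def, Hgrp.mk.injEq, pow2_add]
    constructor <;> ring
  one_mul a := by
    obtain ⟨r, m⟩ := a
    simp only [Hgrp.one_def, Hgrp.mul_def, Hgrp.mk.injEq, pow2_zero]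
    constructor <;> ring
  mul_one a := by
    obtain ⟨r, m⟩ := a
    simp only [Hgrp.one_def, Hgrp.mul_def, Hgrp.mk.injEq, pow2_zero]
    constructor <;> ring
  inv_mul_cancel a := by
    simp only [Hgrp.inv_def, Hgrp.mul_def, Hgrp.one_def, Hgrp.mk.injEq]
    constructor <;> ring

/-- Conjugacy in `H`. -/
def conjH (x y : Hgrp) : Prop := ∃ z : Hgrp, z * x * z⁻¹ = y

/-- The element `a = (1,0)` of `H`. -/
def aH : Hgrp := ⟨1, 0⟩
/-- The element `t = (0,1)` of `H`. -/
def tH : Hgrp := ⟨0, 1⟩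
lemma aH_zpow (n : ℤ) : aH ^ n = Hgrp.mk (n : DyadicQ) 0 := by
  induction n using Int.induction_on with
  | zero => simp [Hgrp.one_def]
  | succ k ih =>
      rw [zpow_add_one, ih]
      simp only [aH, Hgrp.mul_def, Hgrp.mk.injEq, pow2_zero]
      push_cast
      constructor <;> first | ring | (apply Subtype.ext; push_cast; ring) | simp | (apply Subtype.ext; simp; ring)
  | pred k ih =>
      rw [zpow_sub_one, ih]
      simp only [aH, Hgrp.inv_def, Hgrp.mul_def, Hgrp.mk.injEq, pow2_zero, neg_zero]
      push_cast
      constructor <;> first | ring | (apply Subtype.ext; push_cast; ring) | simp | (apply Subtype.ext; simp; ring)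

lemma tH_zpow (n : ℤ) : tH ^ n = Hgrp.mk 0 n := by
  induction n using Int.induction_on with
  | zero => simp [Hgrp.one_def]
  | succ k ih =>
      rw [zpow_add_one, ih]
      simp [tH, Hgrp.mul_def]
  | pred k ih =>
      rw [zpow_sub_one, ih]
      simp only [tH, Hgrp.inv_def, Hgrp.mul_def, Hgrp.mk.injEq]
      constructor <;> ring

lemma aH_zpow_injective : Function.Injective fun n : ℤ => aH ^ n := by
  intro x y h
  simp only [aH_zpow, Hgrp.mk.injEq] at h
  have : ((x : DyadicQ) : ℚ) = ((y : DyadicQ) : ℚ) := by rw [h.1]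
  simpa using this

lemma tH_zpow_injective : Function.Injective fun n : ℤ => tH ^ n := by
  intro x y h
  simp only [tH_zpow, Hgrp.mk.injEq] at h
  exact h.2

/-- The homomorphism `ℤ →* G` given by powers of `g`. -/
def zintHom {G : Type*} [Group G] (g : G) : Multiplicative ℤ →* G where
  toFun n := g ^ (Multiplicative.toAdd n)
  map_one' := by simp
  map_mul' x y := by simp [zpow_add]

/-- For `g` with `n ↦ g ^ n` injective, `⟨g⟩ ≅ ℤ`. -/
noncomputable def zpowMulEquiv {G : Type*} [Group G] (g : G)
    (hg : Function.Injective fun n : ℤ => g ^ n) :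
    Multiplicative ℤ ≃* Subgroup.zpowers g := by
  refine MulEquiv.ofBijective
    ((zintHom g).codRestrict (Subgroup.zpowers g).toSubmonoid
      (fun n => Subgroup.mem_zpowers_iff.mpr ⟨Multiplicative.toAdd n, rfl⟩)) ⟨?_, ?_⟩
  · intro x y h
    have : g ^ (Multiplicative.toAdd x) = g ^ (Multiplicative.toAdd y) :=
      congrArg Subtype.val h
    exact hg this
  · rintro ⟨x, hx⟩
    obtain ⟨n, hn⟩ := Subgroup.mem_zpowers_iff.mp hx
    exact ⟨Multiplicative.ofAdd n, Subtype.ext hn⟩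

/-- The associated isomorphism `⟨a⟩ ≅ ⟨t⟩`, `a ↦ t`, of the HNN extension defining
the Baumslag group. -/
noncomputable def φBS : Subgroup.zpowers aH ≃* Subgroup.zpowers tH :=
  (zpowMulEquiv aH aH_zpow_injective).symm.trans (zpowMulEquiv tH tH_zpow_injective)

/-- The Baumslag group `G(1,2)`, as HNN extension of `H = BS(1,2)` with stable letter `b`,
associated subgroups `⟨a⟩` and `⟨t⟩`, and associated isomorphism `a ↦ t`. -/
noncomputable abbrev BG := HNNExtension Hgrp (Subgroup.zpowers aH) (Subgroup.zpowers tH) φBS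

/-- The embedding of `H` into the Baumslag group. -/
noncomputable def ι : Hgrp →* BG := HNNExtension.of

/-- The stable letter `b` of the Baumslag group. -/
noncomputable def bBG : BG := HNNExtension.t

/-- Conjugacy in the Baumslag group `G(1,2)`. -/
def conjBG (x y : BG) : Prop := ∃ z : BG, z * x * z⁻¹ = y

/-- The tower function: `tow 0 = 0`, `tow (i+1) = 2 ^ tow i`. -/
def tow : ℕ → ℕ
  | 0 => 0
  | i + 1 => 2 ^ tow i

/-- The elements `w_0 = t`, `w_{n+1} = b·w_n·a·w_n⁻¹·b⁻¹` of `G(1,2)`. -/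
noncomputable def wseq : ℕ → BG
  | 0 => ι tH
  | n + 1 => bBG * wseq n * ι aH * (wseq n)⁻¹ * bBG⁻¹

/-- The word lengths `ℓ(0) = 1`, `ℓ(n+1) = 2·ℓ(n) + 3` of the words `w_n`. -/
def lenw : ℕ → ℕ
  | 0 => 1
  | n + 1 => 2 * lenw n + 3

/-! `t` conjugates `a` to `a²` inside `H`, and `b` conjugates `a` to `t` in `G(1,2)`. Iterating the
first relation, `t^T a t^{-T} = a^{2^T}`; conjugating by `b` then gives `w_{n+1} = t^{2^T}` when
`w_n = t^T`, which is exactly the recursion of the tower function. -/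

theorem conj_pow_eq_pow_pow {G : Type*} [Group G] {g x : G} {m : ℕ} (h : g * x * g⁻¹ = x ^ m)
    (k : ℕ) : g ^ k * x * (g ^ k)⁻¹ = x ^ m ^ k := by
  induction k with
  | zero => simp
  | succ k ih =>
    calc g ^ (k + 1) * x * (g ^ (k + 1))⁻¹ = g * (g ^ k * x * (g ^ k)⁻¹) * g⁻¹ := by group
      _ = (g * x * g⁻¹) ^ m ^ k := by rw [ih, conj_pow]
      _ = x ^ m ^ (k + 1) := by rw [h, ← pow_mul, pow_succ']

lemma pow2_one : pow2 1 = 2 := by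
  ext
  simp only [pow2, DyadicQ.two, zpow_one]
  rfl

lemma tH_mul_aH_mul_inv : tH * aH * tH⁻¹ = aH ^ 2 := by
  simp only [tH, aH, pow_two, Hgrp.mul_def, Hgrp.inv_def, pow2_one, pow2_zero, Hgrp.mk.injEq]
  constructor <;> ring

lemma ι_tH_mul_ι_aH_mul_inv : ι tH * ι aH * (ι tH)⁻¹ = ι aH ^ 2 := by
  rw [← map_inv, ← map_mul, ← map_mul, tH_mul_aH_mul_inv, map_pow]

lemma φBS_aH : (φBS ⟨aH, Subgroup.mem_zpowers aH⟩ : Hgrp) = tH := by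
  have ha : (⟨aH, Subgroup.mem_zpowers aH⟩ : Subgroup.zpowers aH)
      = zpowMulEquiv aH aH_zpow_injective (Multiplicative.ofAdd 1) :=
    Subtype.ext (zpow_one aH).symm
  rw [ha, φBS, MulEquiv.trans_apply, MulEquiv.symm_apply_apply]
  exact zpow_one tH

lemma bBG_mul_ι_aH_mul_inv : bBG * ι aH * bBG⁻¹ = ι tH := by
  have h := HNNExtension.equiv_eq_conj (φ := φBS) ⟨aH, Subgroup.mem_zpowers aH⟩
  rw [φBS_aH] at h
  exact h.symm

lemma wseq_eq (n : ℕ) : wseq n = ι tH ^ tow (n + 1) := by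
  induction n with
  | zero => simp [wseq, tow]
  | succ n ih =>
    calc wseq (n + 1)
        = bBG * (ι tH ^ tow (n + 1) * ι aH * (ι tH ^ tow (n + 1))⁻¹) * bBG⁻¹ := by
          rw [wseq, ih]; group
      _ = (bBG * ι aH * bBG⁻¹) ^ 2 ^ tow (n + 1) := by
          rw [conj_pow_eq_pow_pow ι_tH_mul_ι_aH_mul_inv, conj_pow]
      _ = ι tH ^ tow (n + 2) := by rw [bBG_mul_ι_aH_mul_inv]; rfl

lemma lenw_add_three (n : ℕ) : lenw n + 3 = 2 ^ (n + 2) := by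
  induction n with
  | zero => rfl
  | succ n ih => rw [lenw, pow_succ]; omega

theorem stmt9 : ∀ n : ℕ, lenw n = 2 ^ (n + 2) - 3 ∧ wseq n = ι tH ^ tow (n + 1) :=
  fun n => ⟨by rw [← lenw_add_three, Nat.add_sub_cancel], wseq_eq n⟩
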